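/- arXiv:1411.7958 — 4 statements merged into one kernel-verified Lean document; each statement's English description precedes it below -/
import Mathlib

section
/- Let g : ℝ → ℝ be a nonnegative, non-increasing, right-continuous function on [0,∞) with g(t) → 0 as t → +∞. Assume there exists a constant C > 0 such that s·g(t+s) ≤ C·g(t)² for all s ∈ [0,1] and all t > 0. If t₀ > 0 satisfies g(t₀) ≤ 1/(2C), then g(t) = 0 for every t ≥ t₀ + 2. -/
private def deGiorgiSeq (g : ℝ → ℝ) (C t₀ : ℝ) : ℕ → ℝ
  | 0 => t₀
  | n + 1 => deGiorgiSeq g C t₀ n + 2 * C * g (deGiorgiSeq g C t₀ n)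

/-- De Giorgi–Kołodziej iteration lemma: if `g : ℝ → ℝ` is nonnegative, non-increasing
and right-continuous on `[0,∞)`, tends to `0` at `+∞`, and satisfies
`s * g (t+s) ≤ C * (g t)^2` for all `s ∈ [0,1]` and `t > 0`, then `g` vanishes on
`[t₀ + 2, ∞)` whenever `g t₀ ≤ 1/(2C)` with `t₀ > 0`. -/
theorem kolodziej_iteration_lemma (g : ℝ → ℝ)
    (hg_nonneg : ∀ t, 0 ≤ t → 0 ≤ g t)
    (hg_anti : AntitoneOn g (Set.Ici 0))
    (hg_rc : ∀ t, 0 ≤ t → ContinuousWithinAt g (Set.Ici t) t)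
    (hg_lim : Filter.Tendsto g Filter.atTop (nhds 0))
    (C : ℝ) (hC : 0 < C)
    (hkey : ∀ s, s ∈ Set.Icc (0 : ℝ) 1 → ∀ t, 0 < t → s * g (t + s) ≤ C * (g t) ^ 2)
    (t₀ : ℝ) (ht₀ : 0 < t₀) (h₀ : g t₀ ≤ 1 / (2 * C)) :
    ∀ t, t₀ + 2 ≤ t → g t = 0 := by
  intro t ht
  set τ : ℕ → ℝ := deGiorgiSeq g C t₀ with hτ
  have key : ∀ n, 0 < τ n ∧ τ n ≤ t₀ + 2 - 2 * (1/2 : ℝ)^n ∧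
      g (τ n) ≤ (1/2 : ℝ)^n * (1 / (2 * C)) := by
    intro n
    induction n with
    | zero =>
      refine ⟨ht₀, by norm_num [hτ, deGiorgiSeq], by simpa [hτ, deGiorgiSeq] using h₀⟩
    | succ n ih =>
      obtain ⟨hxpos, hxle, hgx⟩ := ih
      set x := τ n with hx
      have hCpos : (0:ℝ) < 2 * C := by linarith
      have hgx0 : 0 ≤ g x := hg_nonneg x hxpos.le
      have hpow : (0:ℝ) < (1/2:ℝ)^n := by positivity
      set s := 2 * C * g x with hs
      have hs0 : 0 ≤ s := by positivity
      have hs_le : s ≤ (1/2:ℝ)^n := by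
        have : g x ≤ (1/2:ℝ)^n * (1 / (2*C)) := hgx
        rw [hs]
        calc 2 * C * g x ≤ 2 * C * ((1/2:ℝ)^n * (1 / (2*C))) := by
              apply mul_le_mul_of_nonneg_left hgx hCpos.le
          _ = (1/2:ℝ)^n := by field_simp
      have hs1 : s ≤ 1 := by
        have : (1/2:ℝ)^n ≤ 1 := by
          apply pow_le_one₀ <;> norm_num
        linarith
      have hstep : g (x + s) ≤ g x / 2 := by
        rcases eq_or_lt_of_le hgx0 with h0 | hgxpos
        · have hs0' : s = 0 := by rw [hs, ← h0]; ring
          rw [hs0', add_zero, ← h0]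
          norm_num
        · have hkey' := hkey s ⟨hs0, hs1⟩ x hxpos
          have hspos : 0 < s := by rw [hs]; positivity
          nlinarith [hkey', hspos]
      have hτsucc : τ (n+1) = x + s := by rfl
      have hpos' : 0 < τ (n+1) := by rw [hτsucc]; linarith
      refine ⟨hpos', ?_, ?_⟩
      · rw [hτsucc]
        have : (1/2:ℝ)^(n+1) = (1/2:ℝ)^n / 2 := by ring
        rw [this]
        linarith
      · rw [hτsucc]
        calc g (x + s) ≤ g x / 2 := hstep
          _ ≤ ((1/2:ℝ)^n * (1 / (2*C))) / 2 := by linarith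
          _ = (1/2:ℝ)^(n+1) * (1 / (2*C)) := by ring
  have ht0 : 0 ≤ t := by linarith
  have hub : ∀ n, g t ≤ (1/2:ℝ)^n * (1 / (2*C)) := by
    intro n
    obtain ⟨hxpos, hxle, hgx⟩ := key n
    have hτt : τ n ≤ t := by
      have : (0:ℝ) ≤ 2 * (1/2:ℝ)^n := by positivity
      linarith
    exact le_trans (hg_anti hxpos.le ht0 hτt) hgx
  have hlim : Filter.Tendsto (fun n : ℕ => (1/2:ℝ)^n * (1 / (2*C)))
      Filter.atTop (nhds 0) := by
    have := tendsto_pow_atTop_nhds_zero_of_lt_one (by norm_num : (0:ℝ) ≤ 1/2)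
      (by norm_num : (1/2:ℝ) < 1)
    simpa using this.mul_const (1 / (2*C))
  have hle0 : g t ≤ 0 := ge_of_tendsto' hlim hub
  exact le_antisymm hle0 (hg_nonneg t ht0)
end

section
/- Let n ≥ 1 and let A, B be positive definite Hermitian n×n complex matrices. Then tr(B⁻¹·A) ≤ n·(det A / det B)·(tr(A⁻¹·B))^(n−1), where det A and det B denote the determinants of A and B (which are positive real numbers) and tr denotes the trace. -/
open Matrix
open scoped ComplexOrder

/-!
Write `B = Sᴴ S` with `S` invertible. The congruent matrix `M = (S⁻¹)ᴴ A S⁻¹` is positive definite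
with `tr M = tr (B⁻¹ A)`, `tr M⁻¹ = tr (A⁻¹ B)` and `det M = det A / det B`, so it suffices to
treat a single positive definite `M`, i.e. its eigenvalues `λᵢ > 0`. There each
`λᵢ = (∏ λ) · ∏_{j ≠ i} λⱼ⁻¹ ≤ (∏ λ) · (∑ λ⁻¹)^(n-1)`, and summing over `i` gives the claim.
-/

section

open Finset

variable {ι : Type*} [Fintype ι] {μ : ι → ℝ}

theorem le_prod_mul_sum_inv_pow (hμ : ∀ i, 0 < μ i) (i : ι) :
    μ i ≤ (∏ j, μ j) * (∑ j, (μ j)⁻¹) ^ (Fintype.card ι - 1) := by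
  classical
  have hμi : μ i = (∏ j, μ j) * ∏ j ∈ univ.erase i, (μ j)⁻¹ := by
    rw [← mul_prod_erase univ μ (mem_univ i), mul_assoc, ← prod_mul_distrib,
      prod_congr rfl fun j _ => mul_inv_cancel₀ (hμ j).ne', prod_const_one, mul_one]
  rw [hμi, ← card_univ, ← card_erase_of_mem (mem_univ i), ← prod_const]
  have hinv : ∀ j, 0 ≤ (μ j)⁻¹ := fun j => inv_nonneg.2 (hμ j).le
  exact mul_le_mul_of_nonneg_left
    (prod_le_prod (fun j _ => hinv j) fun j _ => single_le_sum (fun k _ => hinv k) (mem_univ j))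
    (prod_nonneg fun j _ => (hμ j).le)

theorem sum_le_card_mul_prod_mul_sum_inv_pow (hμ : ∀ i, 0 < μ i) :
    ∑ i, μ i ≤ Fintype.card ι * (∏ i, μ i) * (∑ i, (μ i)⁻¹) ^ (Fintype.card ι - 1) := by
  calc ∑ i, μ i ≤ ∑ _i : ι, (∏ j, μ j) * (∑ j, (μ j)⁻¹) ^ (Fintype.card ι - 1) :=
        sum_le_sum fun i _ => le_prod_mul_sum_inv_pow hμ i
    _ = _ := by rw [sum_const, card_univ, nsmul_eq_mul, mul_assoc]

end

namespace Matrix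

variable {ι : Type*} [Fintype ι] [DecidableEq ι]

section Congruence

variable {K : Type*} [Field K] [StarRing K]

theorem trace_conjTranspose_inv_mul_mul_inv (A S : Matrix ι ι K) :
    ((S⁻¹)ᴴ * A * S⁻¹).trace = ((Sᴴ * S)⁻¹ * A).trace := by
  rw [trace_mul_cycle, mul_inv_rev, conjTranspose_nonsing_inv]

theorem trace_inv_conjTranspose_inv_mul_mul_inv (A : Matrix ι ι K) {S : Matrix ι ι K}
    (hS : IsUnit S) :
    ((S⁻¹)ᴴ * A * S⁻¹)⁻¹.trace = (A⁻¹ * (Sᴴ * S)).trace := by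
  obtain ⟨_⟩ := hS.nonempty_invertible
  rw [mul_inv_rev, mul_inv_rev, conjTranspose_nonsing_inv, inv_inv_of_invertible,
    inv_inv_of_invertible, trace_mul_comm, mul_assoc]

theorem det_conjTranspose_inv_mul_mul_inv (A S : Matrix ι ι K) :
    ((S⁻¹)ᴴ * A * S⁻¹).det = A.det / (Sᴴ * S).det := by
  rw [det_mul, det_mul, det_mul, det_conjTranspose, det_conjTranspose, det_nonsing_inv,
    Ring.inverse_eq_inv', star_inv₀]
  field_simp

end Congruence

variable {𝕜 : Type*} [RCLike 𝕜] {A : Matrix ι ι 𝕜}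

theorem IsHermitian.trace_cfc (hA : A.IsHermitian) (f : ℝ → ℝ) :
    (cfc f A).trace = ∑ i, (f (hA.eigenvalues i) : 𝕜) := by
  rw [hA.cfc_eq, IsHermitian.cfc, Unitary.conjStarAlgAut_apply, trace_mul_cycle,
    Unitary.coe_star_mul_self, one_mul, trace_diagonal]
  rfl

theorem IsHermitian.trace_inv (hA : A.IsHermitian) (hAu : IsUnit A) :
    A⁻¹.trace = ∑ i, ((hA.eigenvalues i)⁻¹ : 𝕜) := by
  rw [nonsing_inv_eq_ringInverse, ← cfc_ringInverse_id (R := ℝ) (a := A) hAu hA.isSelfAdjoint,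
    hA.trace_cfc]
  push_cast; rfl

theorem PosDef.re_trace_le (hA : A.PosDef) :
    RCLike.re A.trace ≤
      Fintype.card ι * RCLike.re A.det * (RCLike.re A⁻¹.trace) ^ (Fintype.card ι - 1) := by
  have hH := hA.isHermitian
  rw [hH.trace_eq_sum_eigenvalues, hH.trace_inv hA.isUnit, hH.det_eq_prod_eigenvalues]
  simp only [← RCLike.ofReal_inv, ← RCLike.ofReal_sum, ← RCLike.ofReal_prod, RCLike.ofReal_re]
  exact sum_le_card_mul_prod_mul_sum_inv_pow hA.eigenvalues_pos

theorem PosDef.ofReal_re_det (hA : A.PosDef) : (RCLike.re A.det : 𝕜) = A.det := by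
  obtain ⟨x, -, hx⟩ := RCLike.pos_iff_exists_ofReal.mp hA.det_pos
  rw [← hx, RCLike.ofReal_re]

theorem PosDef.re_div_det (hA : A.PosDef) (z : 𝕜) :
    RCLike.re (z / A.det) = RCLike.re z / RCLike.re A.det := by
  rw [← hA.ofReal_re_det, RCLike.div_re_ofReal, RCLike.ofReal_re]

end Matrix

open scoped MatrixOrder in
theorem trace_inv_mul_le_n_mul_det_div_det_mul_trace_pow_general
    (n : ℕ) (A B : Matrix (Fin n) (Fin n) ℂ)
    (hA : A.PosDef) (hB : B.PosDef) :
    ((B⁻¹ * A).trace).re ≤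
      (n : ℝ) * (A.det.re / B.det.re) * (((A⁻¹ * B).trace).re) ^ (n - 1) := by
  obtain ⟨S, hS, rfl⟩ :=
    CStarAlgebra.isStrictlyPositive_iff_eq_star_mul_self.mp hB.isStrictlyPositive
  rw [star_eq_conjTranspose] at hB ⊢
  have hM : ((S⁻¹)ᴴ * A * S⁻¹).PosDef :=
    hA.conjTranspose_mul_mul_same <|
      mulVec_injective_iff_isUnit.mpr (isUnit_nonsing_inv_iff.mpr hS)
  have key := hM.re_trace_le
  rw [trace_conjTranspose_inv_mul_mul_inv, trace_inv_conjTranspose_inv_mul_mul_inv A hS,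
    det_conjTranspose_inv_mul_mul_inv, hB.re_div_det, Fintype.card_fin] at key
  exact key

/-- For positive definite Hermitian matrices `A`, `B`,
`tr (B⁻¹ * A) ≤ n * (det A / det B) * (tr (A⁻¹ * B))^(n-1)`. -/
theorem trace_inv_mul_le_n_mul_det_div_det_mul_trace_pow
    (n : ℕ) (hn : 1 ≤ n) (A B : Matrix (Fin n) (Fin n) ℂ)
    (hA : A.PosDef) (hB : B.PosDef) :
    ((B⁻¹ * A).trace).re ≤
      (n : ℝ) * (A.det.re / B.det.re) * (((A⁻¹ * B).trace).re) ^ (n - 1) :=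
  trace_inv_mul_le_n_mul_det_div_det_mul_trace_pow_general n A B hA hB
end

section
/- Let n ≥ 1 and let μ : Fin n → ℝ satisfy μ(i) > 0 for every i. Then ∑ᵢ μ(i) ≤ n · (∏ⱼ μ(j)) · (∑ⱼ 1/μ(j))^(n−1). -/
/-- Eigenvalue form: for positive `μ i`,
`∑ μ i ≤ n * (∏ μ j) * (∑ 1/μ j)^(n-1)`. -/
theorem sum_le_n_mul_prod_mul_sum_inv_pow
    (n : ℕ) (hn : 1 ≤ n) (μ : Fin n → ℝ) (hμ : ∀ i, 0 < μ i) :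
    ∑ i, μ i ≤ (n : ℝ) * (∏ j, μ j) * (∑ j, 1 / μ j) ^ (n - 1) := by
  have key : ∀ i, μ i ≤ (∏ j, μ j) * (∑ j, 1 / μ j) ^ (n - 1) := by
    intro i
    have heq : μ i = (∏ j, μ j) * ∏ j ∈ Finset.univ.erase i, (1 / μ j) := by
      rw [← Finset.prod_erase_mul Finset.univ μ (Finset.mem_univ i)]
      rw [mul_comm (∏ j ∈ Finset.univ.erase i, μ j) (μ i), mul_assoc,
        ← Finset.prod_mul_distrib]
      have : ∀ j ∈ Finset.univ.erase i, μ j * (1 / μ j) = 1 := by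
        intro j _; exact mul_one_div_cancel (hμ j).ne'
      rw [Finset.prod_congr rfl this, Finset.prod_const_one, mul_one]
    rw [heq]
    apply mul_le_mul_of_nonneg_left _ (Finset.prod_nonneg fun j _ => (hμ j).le)
    calc ∏ j ∈ Finset.univ.erase i, (1 / μ j)
        ≤ ∏ _j ∈ Finset.univ.erase i, (∑ j, 1 / μ j) := by
          apply Finset.prod_le_prod
          · intro j _; exact (one_div_pos.mpr (hμ j)).le
          · intro j _
            exact Finset.single_le_sum (f := fun k => 1 / μ k) (fun k _ => (one_div_pos.mpr (hμ k)).le) (Finset.mem_univ j)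
      _ = (∑ j, 1 / μ j) ^ (n - 1) := by
          rw [Finset.prod_const, Finset.card_erase_of_mem (Finset.mem_univ i),
            Finset.card_univ, Fintype.card_fin]
  calc ∑ i, μ i ≤ ∑ _i : Fin n, (∏ j, μ j) * (∑ j, 1 / μ j) ^ (n - 1) :=
        Finset.sum_le_sum fun i _ => key i
    _ = (n : ℝ) * (∏ j, μ j) * (∑ j, 1 / μ j) ^ (n - 1) := by
        rw [Finset.sum_const, Finset.card_univ, Fintype.card_fin, nsmul_eq_mul, mul_assoc]
end

section
/- Let n ≥ 1 be a natural number, C ∈ ℝ, t₀ > 0, and let f : ℝ → ℝ satisfy f(t) ≥ f(s) + n·(t−s)·(log(t−s) − C) for all real s, t with 0 ≤ s ≤ t ≤ t₀ (with the convention log 0 = 0). Define ψ(t) := f(t) + n·C·t − n·t·log t. Then ψ(t) ≥ ψ(s) − n·t·log 2 for all 0 ≤ s ≤ t ≤ t₀. -/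
lemma two_point_log_ineq (a b : ℝ) (ha : 0 ≤ a) (hb : 0 ≤ b) :
    (a + b) * Real.log ((a + b) / 2) ≤ a * Real.log a + b * Real.log b := by
  have h := Real.convexOn_mul_log.2 (Set.mem_Ici.mpr ha) (Set.mem_Ici.mpr hb)
    (by norm_num : (0:ℝ) ≤ 1/2) (by norm_num : (0:ℝ) ≤ 1/2) (by norm_num)
  simp only [smul_eq_mul] at h
  have he : (1/2 : ℝ) * a + (1/2) * b = (a + b) / 2 := by ring
  rw [he] at h
  nlinarith [h]

/-- If `f t ≥ f s + n (t-s)(log(t-s) - C)` for `0 ≤ s ≤ t ≤ t₀`, then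
`ψ t := f t + n C t - n t log t` satisfies `ψ t ≥ ψ s - n t log 2`. -/
theorem psi_almost_monotone
    (n : ℕ) (hn : 1 ≤ n) (C t₀ : ℝ) (ht₀ : 0 < t₀) (f : ℝ → ℝ)
    (hf : ∀ s t : ℝ, 0 ≤ s → s ≤ t → t ≤ t₀ →
      f s + (n : ℝ) * (t - s) * (Real.log (t - s) - C) ≤ f t)
    (ψ : ℝ → ℝ)
    (hψ : ∀ t, ψ t = f t + (n : ℝ) * C * t - (n : ℝ) * t * Real.log t) :
    ∀ s t : ℝ, 0 ≤ s → s ≤ t → t ≤ t₀ →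
      ψ s - (n : ℝ) * t * Real.log 2 ≤ ψ t := by
  intro s t hs hst htt
  rcases eq_or_lt_of_le (hs.trans hst) with ht0 | ht0
  · -- t = 0, so s = 0
    have : s = 0 := le_antisymm (hst.trans ht0.symm.le) hs
    simp [hψ, this, ← ht0]
  · have hkey := two_point_log_ineq (t - s) s (by linarith) hs
    have he : (t - s) + s = t := by ring
    rw [he] at hkey
    have hlog : Real.log (t / 2) = Real.log t - Real.log 2 :=
      Real.log_div (ne_of_gt ht0) two_ne_zero
    rw [hlog] at hkey
    have hf' := hf s t hs hst htt
    have hn' : (0:ℝ) ≤ (n:ℝ) := Nat.cast_nonneg n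
    rw [hψ s, hψ t]
    nlinarith [mul_le_mul_of_nonneg_left hkey hn']
end
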